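/- Let z ∈ ℂ with α := Re z ≥ 1, ℓ an integer with 0 ≤ ℓ ≤ ⌊α - 1/2⌋, and s(x) = |q(x)|² + |q(1-x)|² as above. Then the derivative of s equals s'(x) = Σ_{k=0}^{ℓ} 2 Re(A_k) [ (1-x)^{ℓ+k} x^{2α-1} - x^{ℓ+k} (1-x)^{2α-1} ] for x ∈ (0,1), where A_k = (z+ℓ)·C(z-1+ℓ, ℓ)·conj(C(z-1+k, k)). -/

import Mathlib

open Complex Finset Real

/-- Generalized binomial coefficient `C(w, j) = Γ(w+1) / (Γ(j+1) Γ(w-j+1))`. -/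
noncomputable def genBinom (w : ℂ) (j : ℕ) : ℂ :=
  Complex.Gamma (w + 1) / (Complex.Gamma ((j : ℂ) + 1) * Complex.Gamma (w - j + 1))

/-- `q(x) = (1-x)^z ∑_{k=0}^ℓ C(z+ℓ,k) x^k (1-x)^{ℓ-k}`. -/
noncomputable def qfun (z : ℂ) (ℓ : ℕ) (x : ℝ) : ℂ :=
  (((1 - x : ℝ) : ℂ)) ^ z *
    ∑ k ∈ range (ℓ + 1), genBinom (z + ℓ) k * (x : ℂ) ^ k * ((1 : ℂ) - x) ^ (ℓ - k)

/-- `s(x) = |q(x)|² + |q(1-x)|²`. -/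
noncomputable def sfun (z : ℂ) (ℓ : ℕ) (x : ℝ) : ℝ :=
  ‖qfun z ℓ x‖ ^ 2 + ‖qfun z ℓ (1 - x)‖ ^ 2

/-! Summing the binomial coefficients against `x ^ k (1 - x) ^ (ℓ - k)` (Pascal's rule, by
induction on `ℓ`) gives `q(x) = (1 - x) ^ z P(x)`, where `P(x) = ∑_{k ≤ ℓ} c_k x ^ k` with
`c_k = C(z - 1 + k, k)` is the Taylor polynomial of `(1 - x) ^ (-z)`. Since
`(k + 1) c_{k+1} = (z + k) c_k`, the combination `(1 - x) P' - z P` telescopes to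
`-(z + ℓ) c_ℓ x ^ ℓ`, so `q'(x) = -(z + ℓ) c_ℓ x ^ ℓ (1 - x) ^ (z - 1)`. Then
`(|q|²)' = 2 Re (q' · conj q)`, and `conj ((1 - x) ^ z) (1 - x) ^ (z - 1) = (1 - x) ^ (2α - 1)`
produces the terms `x ^ (ℓ + k) (1 - x) ^ (2α - 1)`; the reflection `x ↦ 1 - x` gives the rest. -/

open scoped ComplexConjugate

lemma genBinom_zero {w : ℂ} (hw : -1 < w.re) : genBinom w 0 = 1 := by
  have hΓ : Gamma (w + 1) ≠ 0 :=
    Gamma_ne_zero_of_re_pos (by simp only [add_re, one_re]; linarith)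
  simp [genBinom, hΓ]

lemma genBinom_add_one_succ {b : ℂ} {k : ℕ} (h : (k : ℝ) < b.re) :
    genBinom (b + 1) (k + 1) = genBinom b (k + 1) + genBinom b k := by
  have hk : (0 : ℝ) ≤ k := k.cast_nonneg
  have hu : 0 < (b - k).re := by simp only [sub_re, natCast_re]; linarith
  have hk1 : 0 < ((k : ℂ) + 1).re := by simp only [add_re, natCast_re, one_re]; linarith
  have hb1 : 0 < (b + 1).re := by simp only [add_re, one_re]; linarith
  have hΓu := Gamma_ne_zero_of_re_pos hu
  have hΓk := Gamma_ne_zero_of_re_pos hk1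
  have hu' := ne_zero_of_re_pos hu
  unfold genBinom
  push_cast
  rw [show b + 1 - (k + 1) + 1 = b - k + 1 by ring, show b - (k + 1) + 1 = b - k by ring,
    Gamma_add_one _ hu', Gamma_add_one _ (ne_zero_of_re_pos hb1),
    Gamma_add_one _ (ne_zero_of_re_pos hk1)]
  field_simp
  ring

lemma succ_mul_genBinom_succ {z : ℂ} (hz : 0 < z.re) (k : ℕ) :
    (k + 1) * genBinom (z - 1 + (k + 1 : ℕ)) (k + 1) = (z + k) * genBinom (z - 1 + k) k := by
  have hk : (0 : ℝ) ≤ k := k.cast_nonneg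
  have hzk : 0 < (z + k).re := by simp only [add_re, natCast_re]; linarith
  have hk1 : 0 < ((k : ℂ) + 1).re := by simp only [add_re, natCast_re, one_re]; linarith
  have hΓz := Gamma_ne_zero_of_re_pos hz
  have hΓk := Gamma_ne_zero_of_re_pos hk1
  unfold genBinom
  push_cast
  rw [show z - 1 + (k + 1) + 1 = z + k + 1 by ring, show z - 1 + (k + 1) - (k + 1) + 1 = z by ring,
    show z - 1 + k + 1 = z + k by ring, show z - 1 + k - k + 1 = z by ring,
    Gamma_add_one _ (ne_zero_of_re_pos hzk), Gamma_add_one _ (ne_zero_of_re_pos hk1)]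
  field_simp

lemma sum_range_succ_mul_pow_of_sub {R : Type*} [CommRing R] {c d : ℕ → R} (h0 : d 0 = c 0)
    (hsucc : ∀ k, d (k + 1) = c (k + 1) - c k) (X : R) (n : ℕ) :
    ∑ k ∈ range (n + 1), d k * X ^ k =
      (1 - X) * ∑ k ∈ range n, c k * X ^ k + c n * X ^ n := by
  induction n with
  | zero => simp [h0]
  | succ n ih =>
    rw [sum_range_succ, ih, hsucc, sum_range_succ]
    ring

lemma sum_genBinom_mul_pow_mul_one_sub_pow {a : ℂ} (ha : 0 ≤ a.re) (m : ℕ) (X : ℂ) :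
    ∑ k ∈ range (m + 1), genBinom (a + (m + 1 : ℕ)) k * X ^ k * (1 - X) ^ (m - k) =
      ∑ k ∈ range (m + 1), genBinom (a + k) k * X ^ k := by
  induction m generalizing a with
  | zero =>
    have ha1 : 0 ≤ (a + 1).re := by simp only [add_re, one_re]; linarith
    simp [genBinom_zero (w := a) (by linarith), genBinom_zero (w := a + 1) (by linarith)]
  | succ m ih =>
    have ha1 : 0 ≤ (a + 1).re := by simp only [add_re, one_re]; linarith
    have hzero : genBinom (a + (0 : ℕ)) 0 = genBinom (a + 1 + (0 : ℕ)) 0 := by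
      simp [genBinom_zero (w := a) (by linarith), genBinom_zero (w := a + 1) (by linarith)]
    have hpascal (k : ℕ) : genBinom (a + (k + 1 : ℕ)) (k + 1) =
        genBinom (a + 1 + (k + 1 : ℕ)) (k + 1) - genBinom (a + 1 + k) k := by
      have hk : (k : ℝ) < (a + 1 + k).re := by
        simp only [add_re, one_re, natCast_re]; linarith
      rw [show a + 1 + ((k + 1 : ℕ) : ℂ) = a + 1 + k + 1 by push_cast; ring,
        genBinom_add_one_succ hk, show a + ((k + 1 : ℕ) : ℂ) = a + 1 + k by push_cast; ring]
      ring
    rw [sum_range_succ_mul_pow_of_sub (c := fun k => genBinom (a + 1 + k) k)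
        (d := fun k => genBinom (a + k) k) hzero hpascal, ← ih ha1,
      show a + ((m + 1 + 1 : ℕ) : ℂ) = a + 1 + (m + 1 : ℕ) by push_cast; ring,
      sum_range_succ, Nat.sub_self, pow_zero, mul_one, mul_sum]
    congr 1
    refine sum_congr rfl fun k hk => ?_
    rw [Nat.sub_add_comm (Nat.lt_succ_iff.mp (mem_range.mp hk)), pow_succ]
    ring

lemma one_sub_mul_sum_deriv_sub_mul_sum {R : Type*} [CommRing R] {c : ℕ → R} {z : R}
    (hc : ∀ k : ℕ, (k + 1) * c (k + 1) = (z + k) * c k) (X : R) (ℓ : ℕ) :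
    (1 - X) * ∑ k ∈ range (ℓ + 1), c k * (k * X ^ (k - 1)) -
        z * ∑ k ∈ range (ℓ + 1), c k * X ^ k = -((z + ℓ) * c ℓ * X ^ ℓ) := by
  induction ℓ with
  | zero => simp
  | succ n ih =>
    rw [sum_range_succ _ (n + 1), sum_range_succ _ (n + 1)]
    push_cast
    linear_combination ih + X ^ n * hc n

noncomputable def invPowTaylor (z : ℂ) (ℓ : ℕ) (X : ℂ) : ℂ :=
  ∑ k ∈ range (ℓ + 1), genBinom (z - 1 + k) k * X ^ k

lemma qfun_eq_cpow_mul_invPowTaylor {z : ℂ} (hz : 1 ≤ z.re) (ℓ : ℕ) (x : ℝ) :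
    qfun z ℓ x = ((1 - x : ℝ) : ℂ) ^ z * invPowTaylor z ℓ x := by
  have ha : 0 ≤ (z - 1).re := by simp only [sub_re, one_re]; linarith
  rw [qfun, invPowTaylor, ← sum_genBinom_mul_pow_mul_one_sub_pow ha,
    show z - 1 + ((ℓ + 1 : ℕ) : ℂ) = z + ℓ by push_cast; ring]

lemma hasDerivAt_invPowTaylor (z : ℂ) (ℓ : ℕ) (X : ℂ) :
    HasDerivAt (invPowTaylor z ℓ)
      (∑ k ∈ range (ℓ + 1), genBinom (z - 1 + k) k * (k * X ^ (k - 1))) X := by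
  unfold invPowTaylor
  exact HasDerivAt.fun_sum fun k _ => (hasDerivAt_pow k X).const_mul _

lemma hasDerivAt_qfun {z : ℂ} (hz : 1 ≤ z.re) (ℓ : ℕ) {x : ℝ} (hx : x < 1) :
    HasDerivAt (qfun z ℓ)
      (-((z + ℓ) * genBinom (z - 1 + ℓ) ℓ * x ^ ℓ * ((1 - x : ℝ) : ℂ) ^ (z - 1))) x := by
  have hpos : (0 : ℝ) < 1 - x := by linarith
  have hslit : ((1 - x : ℝ) : ℂ) ∈ slitPlane := ofReal_mem_slitPlane.2 hpos
  push_cast at hslit ⊢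
  have hf := (((hasDerivAt_id' (x : ℂ)).const_sub 1).cpow_const (c := z) hslit).fun_mul
    (hasDerivAt_invPowTaylor z ℓ x)
  have hq : qfun z ℓ = fun y : ℝ => (1 - (y : ℂ)) ^ z * invPowTaylor z ℓ y := by
    funext y
    rw [qfun_eq_cpow_mul_invPowTaylor hz, ofReal_sub, ofReal_one]
  rw [hq]
  convert hf.comp_ofReal using 1
  have hpow : (1 - (x : ℂ)) ^ z = (1 - x) * (1 - x) ^ (z - 1) := by
    conv_lhs => rw [← sub_add_cancel z 1]
    rw [cpow_add _ _ (slitPlane_ne_zero hslit), cpow_one, mul_comm]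
  have htel := one_sub_mul_sum_deriv_sub_mul_sum (c := fun k => genBinom (z - 1 + k) k)
    (succ_mul_genBinom_succ (by linarith)) (x : ℂ) ℓ
  rw [hpow, invPowTaylor]
  linear_combination (-(1 - (x : ℂ)) ^ (z - 1)) * htel

lemma conj_cpow_mul_cpow_sub_one {r : ℝ} (hr : 0 < r) (z : ℂ) :
    conj ((r : ℂ) ^ z) * (r : ℂ) ^ (z - 1) = ((r ^ (2 * z.re - 1) : ℝ) : ℂ) := by
  have harg : (r : ℂ).arg ≠ π := by rw [arg_ofReal_of_nonneg hr.le]; exact pi_ne_zero.symm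
  rw [← conj_ofReal r, ← cpow_conj _ _ harg, conj_ofReal,
    ← cpow_add _ _ (ofReal_ne_zero.2 hr.ne'), ofReal_cpow hr.le]
  congr 1
  have hre := add_conj z
  push_cast at hre ⊢
  linear_combination hre

lemma hasDerivAt_norm_qfun_sq {z : ℂ} (hz : 1 ≤ z.re) (ℓ : ℕ) {x : ℝ} (hx : x < 1) :
    HasDerivAt (fun y => ‖qfun z ℓ y‖ ^ 2)
      (-∑ k ∈ range (ℓ + 1),
        2 * ((z + ℓ) * genBinom (z - 1 + ℓ) ℓ * conj (genBinom (z - 1 + k) k)).re *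
          (x ^ (ℓ + k) * (1 - x) ^ (2 * z.re - 1))) x := by
  have hpos : (0 : ℝ) < 1 - x := by linarith
  convert (hasDerivAt_qfun hz ℓ hx).norm_sq using 1
  have hprod : -((z + ℓ) * genBinom (z - 1 + ℓ) ℓ * x ^ ℓ * ((1 - x : ℝ) : ℂ) ^ (z - 1)) *
      conj (qfun z ℓ x) =
        -∑ k ∈ range (ℓ + 1), ((x ^ (ℓ + k) * (1 - x) ^ (2 * z.re - 1) : ℝ) : ℂ) *
          ((z + ℓ) * genBinom (z - 1 + ℓ) ℓ * conj (genBinom (z - 1 + k) k)) := by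
    rw [qfun_eq_cpow_mul_invPowTaylor hz, invPowTaylor, map_mul, map_sum, mul_sum, mul_sum,
      ← sum_neg_distrib]
    refine sum_congr rfl fun k _ => ?_
    rw [ofReal_mul, ← conj_cpow_mul_cpow_sub_one hpos, map_mul, map_pow, conj_ofReal]
    push_cast
    ring
  rw [Complex.inner, hprod, neg_re, re_sum, mul_neg, mul_sum]
  simp only [re_ofReal_mul]
  congr 1
  exact sum_congr rfl fun k _ => by ring

theorem stmt7_general (z : ℂ) (hz : 1 ≤ z.re) (ℓ : ℕ)
    (x : ℝ) (hx : x ∈ Set.Ioo (0:ℝ) 1) :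
    HasDerivAt (sfun z ℓ)
      (∑ k ∈ range (ℓ + 1),
        2 * ((z + ℓ) * genBinom (z - 1 + ℓ) ℓ * starRingEnd ℂ (genBinom (z - 1 + k) k)).re *
          ((1 - x) ^ (ℓ + k) * x ^ (2 * z.re - 1) - x ^ (ℓ + k) * (1 - x) ^ (2 * z.re - 1)))
      x := by
  have hdirect := hasDerivAt_norm_qfun_sq hz ℓ hx.2
  have hreflected := (hasDerivAt_norm_qfun_sq hz ℓ (sub_lt_self 1 hx.1)).comp x
    ((hasDerivAt_id' x).const_sub 1)
  rw [sub_sub_cancel] at hreflected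
  refine (hdirect.fun_add hreflected).congr_deriv ?_
  simp only [mul_sub, sum_sub_distrib]
  ring

theorem stmt7 (z : ℂ) (hz : 1 ≤ z.re) (ℓ : ℕ) (hℓ : (ℓ : ℝ) ≤ z.re - 1 / 2)
    (x : ℝ) (hx : x ∈ Set.Ioo (0:ℝ) 1) :
    HasDerivAt (sfun z ℓ)
      (∑ k ∈ range (ℓ + 1),
        2 * ((z + ℓ) * genBinom (z - 1 + ℓ) ℓ * starRingEnd ℂ (genBinom (z - 1 + k) k)).re *
          ((1 - x) ^ (ℓ + k) * x ^ (2 * z.re - 1) - x ^ (ℓ + k) * (1 - x) ^ (2 * z.re - 1)))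
      x :=
  stmt7_general z hz ℓ x hx
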